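/- Let s = s_i ∈ S and U_s^- = { u ∈ U : s u s ∈ w_0 U w_0 } (the root subgroup of s). (1) If u ∈ U_s^- has nonzero off-diagonal entry ζ^c where c = am + bn with 0 ≤ m ≤ b-1 and 0 ≤ n ≤ a-1, then sus = u_1 s h_b^u h_a^u u_2 with u_1, u_2 ∈ U, h_a^u ∈ H_a, and h_b^u = h_{i,i+1}(ζ^{am}) ∈ H_b. (2) The relation u ~ u' iff h_b^u = h_b^{u'} is an equivalence relation on the set of nonidentity elements of U_s^-, and each equivalence class contains exactly a elements. -/

import Mathlib

noncomputable section

open scoped Pointwise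

/-- The general linear group `GL_n(K)`. -/
abbrev GLn (K : Type) [Field K] (n : ℕ) : Type := GL (Fin n) K

/-- `g` is a permutation matrix. -/
def IsPermMat {K : Type} [Field K] {n : ℕ} (g : GLn K n) : Prop :=
  ∃ σ : Equiv.Perm (Fin n),
    ∀ i j : Fin n, (g : Matrix (Fin n) (Fin n) K) i j = if σ j = i then 1 else 0

/-- `W`, the group of permutation matrices in `GL_n(K)`. -/
def Wset (K : Type) [Field K] (n : ℕ) : Set (GLn K n) := {g | IsPermMat g}

/-- The set `S = {s_1, …, s_{n-1}}` of Coxeter generators of `W`: the matrices of the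
adjacent transpositions `(i, i+1)`. -/
def Sset (K : Type) [Field K] (n : ℕ) : Set (GLn K n) :=
  {g | ∃ i j : Fin n, (i : ℕ) + 1 = (j : ℕ) ∧
    ∀ k l : Fin n, (g : Matrix (Fin n) (Fin n) K) k l = if Equiv.swap i j l = k then 1 else 0}

/-- The set `𝒯 = { w s_i w⁻¹ : w ∈ W, s_i ∈ S }` of reflections of `W`. -/
def Tset (K : Type) [Field K] (n : ℕ) : Set (GLn K n) :=
  {t | ∃ w ∈ Wset K n, ∃ s ∈ Sset K n, t = w * s * w⁻¹}

/-- `H_b`: the group of diagonal matrices whose entries are `b`-th roots of unity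
(i.e. entries in `F_b`). -/
def Hbset (K : Type) [Field K] (n b : ℕ) : Set (GLn K n) :=
  {g | (∀ i j : Fin n, i ≠ j → (g : Matrix (Fin n) (Fin n) K) i j = 0) ∧
    ∀ i : Fin n, (g : Matrix (Fin n) (Fin n) K) i i ^ b = 1}

/-- The group `WH_b`: the set of products `w * d` with `w ∈ W` and `d ∈ H_b`. -/
def WHbset (K : Type) [Field K] (n b : ℕ) : Set (GLn K n) :=
  {x | ∃ w ∈ Wset K n, ∃ d ∈ Hbset K n b, x = w * d}

/-- The length function on monomial matrices: the number of inversions of the underlying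
permutation.  For `x = w d ∈ WH_b` this is the Coxeter length `ℓ(w)`, i.e. `len` is the
length function of `W` lifted to `WH_b` via `ℓ(wd) = ℓ(dw) = ℓ(w)`. -/
def len {K : Type} [Field K] {n : ℕ} (g : GLn K n) : ℕ :=
  Set.ncard {p : Fin n × Fin n | p.1 < p.2 ∧ ∃ i i' : Fin n, i' < i ∧
    (g : Matrix (Fin n) (Fin n) K) i p.1 ≠ 0 ∧ (g : Matrix (Fin n) (Fin n) K) i' p.2 ≠ 0}

/-- The diagonal matrix `h_{k,l}(α) = h_k(α) h_l((-1)^{b-1} α⁻¹)`. -/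
def hmat (K : Type) [Field K] {n : ℕ} (b : ℕ) (k l : Fin n) (α : K) :
    Matrix (Fin n) (Fin n) K :=
  Matrix.diagonal fun p => if p = k then α else if p = l then (-1 : K) ^ (b - 1) * α⁻¹ else 1

/-- For a reflection `t` interchanging the `k`-th and `l`-th standard basis vectors
(`t = w s_i w⁻¹`), the subset `X_t = { w h_{i,i+1}(α) w⁻¹ : α ∈ F_b } =
{ h_{k,l}(α) : α^b = 1 }` of `H_b`. -/
def Xset (K : Type) [Field K] (n b : ℕ) (t : GLn K n) : Set (GLn K n) :=
  {d | ∃ k l : Fin n, ∃ α : K, α ^ b = 1 ∧ k ≠ l ∧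
    (∀ p q : Fin n, (t : Matrix (Fin n) (Fin n) K) p q = if Equiv.swap k l q = p then 1 else 0) ∧
    (d : Matrix (Fin n) (Fin n) K) = hmat K b k l α}

/-- `X_s = { h_{k,l}(α) : α^b = 1 }` for the simple reflection `s` interchanging the
`k`-th and `l`-th standard basis vectors. -/
def XsPair (K : Type) [Field K] {n : ℕ} (b : ℕ) (k l : Fin n) : Set (GLn K n) :=
  {d | ∃ α : K, α ^ b = 1 ∧ (d : Matrix (Fin n) (Fin n) K) = hmat K b k l α}

/-- The product `X_1 ⋯ X_r` of a list of subsets of a monoid. -/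
def SetProd {G : Type} [Monoid G] : List (Set G) → Set G
  | [] => {1}
  | X :: L => X * SetProd L

/-- `U`: the group of upper triangular unipotent matrices. -/
def Uset (K : Type) [Field K] (n : ℕ) : Set (GLn K n) :=
  {g | (∀ i j : Fin n, j < i → (g : Matrix (Fin n) (Fin n) K) i j = 0) ∧
    ∀ i : Fin n, (g : Matrix (Fin n) (Fin n) K) i i = 1}

/-- `H_a`: the group of diagonal matrices with entries in `F_a` (the `a`-th roots of unity). -/
def Haset (K : Type) [Field K] (n a : ℕ) : Set (GLn K n) :=
  {g | (∀ i j : Fin n, i ≠ j → (g : Matrix (Fin n) (Fin n) K) i j = 0) ∧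
    ∀ i : Fin n, (g : Matrix (Fin n) (Fin n) K) i i ^ a = 1}

/-- `B_a = H_a U`. -/
def Baset (K : Type) [Field K] (n a : ℕ) : Set (GLn K n) :=
  {g | ∃ h ∈ Haset K n a, ∃ u ∈ Uset K n, g = h * u}

/-!
The condition `s u s ∈ w₀ U w₀` forces `u` to be an elementary matrix `1 + x E_{i,i+1}`,
so that `s u s = 1 + x E_{i+1,i}`, and the `SL₂` identity
`(1 + x⁻¹ E_{i,i+1}) s diag(x, -x⁻¹) (1 + x⁻¹ E_{i,i+1}) = 1 + x E_{i+1,i}`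
is the required Bruhat decomposition. Writing `x = ζ^{am} ζ^{bn}` splits `diag(x, -x⁻¹)` as
`h_{i,i+1}(ζ^{am})` times an element of `H_a`. As `a` and `b` are coprime and `ζ` has order `ab`,
the pairs `(m, n)` with `m < b`, `n < a` parametrise `F^×`, so the class of `u`, which is
determined by `m`, has one element for each `n`.
-/

open Matrix

section PermutationMatrix

variable {ι R : Type*} [DecidableEq ι] [CommRing R] {σ : Equiv.Perm ι}

theorem Matrix.eq_permMatrix_of_apply_eq_ite (hσ : Function.Involutive σ) {P : Matrix ι ι R}
    (hP : ∀ k l, P k l = if σ l = k then 1 else 0) : P = σ.permMatrix R := by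
  ext k l
  rw [hP, Equiv.Perm.permMatrix, PEquiv.toMatrix_apply, Equiv.toPEquiv_apply]
  refine if_congr ?_ rfl rfl
  rw [Option.mem_def, Option.some_inj]
  exact ⟨fun h => h ▸ hσ l, fun h => h ▸ hσ k⟩

theorem Matrix.permMatrix_mul_mul_permMatrix_of_involutive [Fintype ι]
    (hσ : Function.Involutive σ) (M : Matrix ι ι R) :
    σ.permMatrix R * M * σ.permMatrix R = M.submatrix σ σ := by
  rw [PEquiv.toMatrix_toPEquiv_mul, PEquiv.mul_toMatrix_toPEquiv]
  ext k l
  simp [σ.symm_apply_eq.2 (hσ l).symm]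

theorem Matrix.eq_revPerm_permMatrix_of_apply {n : ℕ} {P : Matrix (Fin n) (Fin n) R}
    (hP : ∀ k l : Fin n, P k l = if (k : ℕ) + l + 1 = n then 1 else 0) :
    P = Fin.revPerm.permMatrix R :=
  eq_permMatrix_of_apply_eq_ite Fin.rev_involutive fun k l => by
    rw [hP, Fin.revPerm_apply]
    congr 1
    rw [Fin.ext_iff, Fin.val_rev, eq_iff_iff]
    omega

end PermutationMatrix

section Transvection

variable {ι K : Type*} [DecidableEq ι] [Field K]

theorem Matrix.submatrix_transvection_equiv (e : ι ≃ ι) (i j : ι) (c : K) :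
    (transvection i j c).submatrix e e = transvection (e.symm i) (e.symm j) c := by
  simp [transvection, submatrix_add, submatrix_one_equiv, submatrix_single_equiv]

theorem Matrix.transvection_apply_of_ne {i j p q : ι} (h : ¬(p = i ∧ q = j)) (c : K) :
    transvection i j c p q = (1 : Matrix ι ι K) p q := by
  rw [transvection, Matrix.add_apply, single_apply, if_neg fun h' => h ⟨h'.1.symm, h'.2.symm⟩,
    add_zero]

variable [Fintype ι]

def Matrix.transvectionGL {i j : ι} (hij : i ≠ j) (c : K) : GL ι K :=
  GeneralLinearGroup.mkOfDetNeZero (transvection i j c) (by simp [det_transvection_of_ne _ _ hij])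

variable {i j : ι} (hij : i ≠ j)

@[simp]
theorem Matrix.coe_transvectionGL (c : K) :
    (transvectionGL hij c : Matrix ι ι K) = transvection i j c := rfl

theorem Matrix.transvectionGL_apply_same (c : K) :
    (transvectionGL hij c : Matrix ι ι K) i j = c := by
  simp [transvection, one_apply_ne hij]

theorem Matrix.transvectionGL_injective : Function.Injective (transvectionGL (K := K) hij) :=
  fun c d h => by
    rw [← transvectionGL_apply_same hij c, h, transvectionGL_apply_same]

@[simp]
theorem Matrix.transvectionGL_zero : transvectionGL (K := K) hij 0 = 1 :=
  Units.ext (transvection_zero i j)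

theorem Matrix.transvectionGL_eq_one_iff {c : K} : transvectionGL hij c = 1 ↔ c = 0 :=
  (transvectionGL_injective hij).eq_iff' (transvectionGL_zero hij)

end Transvection

theorem Equiv.swap_apply_lt_swap_apply_of_covBy {α : Type*} [LinearOrder α] {i j p q : α}
    (hij : i ⋖ j) (hpq : p < q) (hne : ¬(p = i ∧ q = j)) : swap i j p < swap i j q := by
  have hp := hij.2 (c := p)
  have hq := hij.2 (c := q)
  simp only [swap_apply_def]
  split_ifs <;> grind [hij.1]

section RootSubgroup

variable {K : Type} [Field K] {n : ℕ}

theorem transvectionGL_mem_Uset {i j : Fin n} (hij : i < j) (c : K) :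
    transvectionGL hij.ne c ∈ Uset K n := by
  refine ⟨fun p q hqp => ?_, fun p => ?_⟩
  · have hpq : ¬(p = i ∧ q = j) := by rintro ⟨rfl, rfl⟩; exact lt_asymm hij hqp
    rw [coe_transvectionGL, transvection_apply_of_ne hpq, one_apply_ne hqp.ne']
  · rw [coe_transvectionGL, transvection_apply_of_ne (by rintro ⟨rfl, rfl⟩; exact hij.ne rfl),
      one_apply_eq]

theorem eq_transvectionGL_of_mem_Uset {u : GLn K n} (hu : u ∈ Uset K n) {i j : Fin n}
    (hij : i < j)
    (h : ∀ p q, p < q → ¬(p = i ∧ q = j) → (u : Matrix (Fin n) (Fin n) K) p q = 0) :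
    u = transvectionGL hij.ne ((u : Matrix (Fin n) (Fin n) K) i j) := by
  ext p q
  by_cases hpq : p = i ∧ q = j
  · obtain ⟨rfl, rfl⟩ := hpq
    rw [transvectionGL_apply_same]
  rw [coe_transvectionGL, transvection_apply_of_ne hpq]
  rcases lt_trichotomy p q with hlt | rfl | hgt
  · rw [h p q hlt hpq, one_apply_ne hlt.ne]
  · rw [hu.2, one_apply_eq]
  · rw [hu.1 p q hgt, one_apply_ne hgt.ne']

def UsMinus (K : Type) [Field K] (n : ℕ) (s w0 : GLn K n) : Set (GLn K n) :=
  {u | u ∈ Uset K n ∧ ∃ v ∈ Uset K n, s * u * s = w0 * v * w0}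

variable {s w0 : GLn K n} {i j : Fin n}

theorem mem_UsMinus_iff (hij : i ⋖ j)
    (hs : (s : Matrix (Fin n) (Fin n) K) = (Equiv.swap i j).permMatrix K)
    (hw0 : (w0 : Matrix (Fin n) (Fin n) K) = Fin.revPerm.permMatrix K) (u : GLn K n) :
    u ∈ UsMinus K n s w0 ↔ ∃ c : K, u = transvectionGL hij.ne c := by
  have hconj : ∀ g : GLn K n, ((s * g * s : GLn K n) : Matrix (Fin n) (Fin n) K) =
      (g : Matrix (Fin n) (Fin n) K).submatrix (Equiv.swap i j) (Equiv.swap i j) := fun g => by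
    rw [Units.val_mul, Units.val_mul, hs,
      permMatrix_mul_mul_permMatrix_of_involutive (Equiv.swap_apply_self i j)]
  have hconj0 : ∀ g : GLn K n, ((w0 * g * w0 : GLn K n) : Matrix (Fin n) (Fin n) K) =
      (g : Matrix (Fin n) (Fin n) K).submatrix Fin.revPerm Fin.revPerm := fun g => by
    rw [Units.val_mul, Units.val_mul, hw0,
      permMatrix_mul_mul_permMatrix_of_involutive Fin.rev_involutive]
  constructor
  · rintro ⟨hu, v, hv, hsuv⟩
    refine ⟨_, eq_transvectionGL_of_mem_Uset hu hij.1 fun p q hpq hne => ?_⟩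
    have h := congrArg (fun g : GLn K n => (g : Matrix (Fin n) (Fin n) K)
      (Equiv.swap i j p) (Equiv.swap i j q)) hsuv
    simp only [hconj, hconj0, submatrix_apply, Equiv.swap_apply_self] at h
    rw [h]
    exact hv.1 _ _ (Fin.rev_lt_rev.2 (Equiv.swap_apply_lt_swap_apply_of_covBy hij hpq hne))
  · rintro ⟨c, rfl⟩
    refine ⟨transvectionGL_mem_Uset hij.1 c, transvectionGL (Fin.rev_lt_rev.2 hij.1).ne c,
      transvectionGL_mem_Uset (Fin.rev_lt_rev.2 hij.1) c, Units.ext ?_⟩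
    rw [hconj, hconj0]
    simp [submatrix_transvection_equiv]

theorem apply_ne_zero_of_mem_UsMinus (hij : i ⋖ j)
    (hs : (s : Matrix (Fin n) (Fin n) K) = (Equiv.swap i j).permMatrix K)
    (hw0 : (w0 : Matrix (Fin n) (Fin n) K) = Fin.revPerm.permMatrix K) {u : GLn K n}
    (hu : u ∈ UsMinus K n s w0) (hu1 : u ≠ 1) : (u : Matrix (Fin n) (Fin n) K) i j ≠ 0 := by
  obtain ⟨c, rfl⟩ := (mem_UsMinus_iff hij hs hw0 u).1 hu
  rwa [transvectionGL_apply_same, Ne, ← transvectionGL_eq_one_iff hij.ne]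

theorem ncard_setOf_mem_UsMinus_ne_one (hij : i ⋖ j)
    (hs : (s : Matrix (Fin n) (Fin n) K) = (Equiv.swap i j).permMatrix K)
    (hw0 : (w0 : Matrix (Fin n) (Fin n) K) = Fin.revPerm.permMatrix K) (P : K → Prop) :
    {u | u ∈ UsMinus K n s w0 ∧ u ≠ 1 ∧ P ((u : Matrix (Fin n) (Fin n) K) i j)}.ncard =
      {x : K | x ≠ 0 ∧ P x}.ncard := by
  have hset : {u | u ∈ UsMinus K n s w0 ∧ u ≠ 1 ∧ P ((u : Matrix (Fin n) (Fin n) K) i j)} =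
      transvectionGL hij.ne '' {x : K | x ≠ 0 ∧ P x} := by
    ext u
    constructor
    · rintro ⟨hu, hu1, hP⟩
      obtain ⟨c, rfl⟩ := (mem_UsMinus_iff hij hs hw0 u).1 hu
      rw [transvectionGL_apply_same] at hP
      exact ⟨c, ⟨mt (transvectionGL_eq_one_iff hij.ne).2 hu1, hP⟩, rfl⟩
    · rintro ⟨c, ⟨hc, hP⟩, rfl⟩
      rw [← transvectionGL_apply_same hij.ne c] at hP
      exact ⟨(mem_UsMinus_iff hij hs hw0 _).2 ⟨c, rfl⟩,
        mt (transvectionGL_eq_one_iff hij.ne).1 hc, hP⟩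
  rw [hset, (transvectionGL_injective hij.ne).injOn.ncard_image]

end RootSubgroup

section Torus

variable {K : Type} [Field K] {n : ℕ}

-- `hmat K 2 k l x = diag(x, -x⁻¹)`, and `hmat K (b + 1) k l β = h_k(β) h_l((-1)^b β⁻¹)`
-- is the `H_a`-factor of the decomposition.
theorem hmat_mul_hmat_succ {b : ℕ} (hb : b ≠ 0) (k l : Fin n) (α β : K) :
    hmat K b k l α * hmat K (b + 1) k l β = hmat K 2 k l (α * β) := by
  have hsign : (-1 : K) ^ (b - 1) * (-1) ^ b = -1 := by
    rw [← pow_add, show b - 1 + b = 2 * (b - 1) + 1 by omega, pow_succ, pow_mul]; simp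
  simp only [hmat, diagonal_mul_diagonal]
  congr 1; funext p
  split_ifs
  · rfl
  · simp only [Nat.add_sub_cancel, mul_inv]
    linear_combination (α⁻¹ * β⁻¹) * hsign
  · ring

theorem det_hmat_ne_zero (b : ℕ) (k l : Fin n) {α : K} (hα : α ≠ 0) :
    (hmat K b k l α).det ≠ 0 := by
  rw [hmat, det_diagonal, Finset.prod_ne_zero_iff]
  intro p _
  split_ifs <;> simp [hα]

def hmatGL (b : ℕ) (k l : Fin n) (α : Kˣ) : GLn K n :=
  GeneralLinearGroup.mkOfDetNeZero (hmat K b k l α) (det_hmat_ne_zero b k l α.ne_zero)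

@[simp]
theorem coe_hmatGL (b : ℕ) (k l : Fin n) (α : Kˣ) :
    (hmatGL b k l α : Matrix (Fin n) (Fin n) K) = hmat K b k l α := rfl

theorem hmatGL_injective (b : ℕ) (k l : Fin n) : Function.Injective (hmatGL (K := K) b k l) :=
  fun α β h => Units.ext <| by
    simpa [hmat] using congrArg (fun g : GLn K n => (g : Matrix (Fin n) (Fin n) K) k k) h

theorem hmatGL_succ_mem_Haset {a b : ℕ} (k l : Fin n) {β : Kˣ} (hβ : β ^ a = 1)
    (hsign : (-1 : K) ^ (a * b) = 1) : hmatGL (b + 1) k l β ∈ Haset K n a := by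
  have hβ' : (β : K) ^ a = 1 := by rw [← Units.val_pow_eq_pow_val, hβ, Units.val_one]
  refine ⟨fun p q hpq => diagonal_apply_ne _ hpq, fun p => ?_⟩
  simp only [coe_hmatGL, hmat, diagonal_apply_eq, Nat.add_sub_cancel]
  split_ifs
  · exact hβ'
  · rw [mul_pow, ← pow_mul, inv_pow, hβ', mul_comm b, hsign, inv_one, mul_one]
  · exact one_pow a

end Torus

section Decomposition

variable {K : Type} [Field K] {n : ℕ} {s w0 : GLn K n} {i j : Fin n}

theorem transvection_mul_swap_mul_hmat_mul_transvection (hij : i ≠ j) {x : K} (hx : x ≠ 0) :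
    transvection i j x⁻¹ * (Equiv.swap i j).permMatrix K * hmat K 2 i j x *
      transvection i j x⁻¹ = transvection j i x := by
  set A := transvection i j x⁻¹ * (Equiv.swap i j).permMatrix K * hmat K 2 i j x
  have hA : ∀ p q, A p q = transvection i j x⁻¹ p (Equiv.swap i j q) *
      (if q = i then x else if q = j then -x⁻¹ else 1) := fun p q => by
    simp [A, hmat, PEquiv.mul_toMatrix_toPEquiv, mul_diagonal]
  rw [transvection, mul_add, mul_one]
  ext p q
  rw [Matrix.add_apply]
  rcases eq_or_ne q j with rfl | hq
  · rw [mul_single_apply_same]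
    simp only [hA, transvection, Matrix.add_apply, one_apply, single_apply, Equiv.swap_apply_def]
    split_ifs <;> grind
  · rw [mul_single_apply_of_ne _ _ _ _ _ hq]
    simp only [hA, transvection, Matrix.add_apply, one_apply, single_apply, Equiv.swap_apply_def]
    split_ifs <;> grind

theorem conj_transvectionGL_eq (hij : i ≠ j)
    (hs : (s : Matrix (Fin n) (Fin n) K) = (Equiv.swap i j).permMatrix K) {b : ℕ} (hb : b ≠ 0)
    (α β : Kˣ) :
    s * transvectionGL hij ((α : K) * β) * s = transvectionGL hij ((α : K) * β)⁻¹ * s *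
      hmatGL b i j α * hmatGL (b + 1) i j β * transvectionGL hij ((α : K) * β)⁻¹ := by
  apply Units.ext
  simp only [Units.val_mul, coe_transvectionGL, coe_hmatGL, hs, mul_assoc _ (hmat K b i j α),
    hmat_mul_hmat_succ hb]
  rw [permMatrix_mul_mul_permMatrix_of_involutive (Equiv.swap_apply_self i j),
    submatrix_transvection_equiv, Equiv.symm_swap, Equiv.swap_apply_left, Equiv.swap_apply_right,
    transvection_mul_swap_mul_hmat_mul_transvection hij (mul_ne_zero α.ne_zero β.ne_zero)]

theorem exists_conj_eq_mul_hmatGL_mul (hij : i ⋖ j)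
    (hs : (s : Matrix (Fin n) (Fin n) K) = (Equiv.swap i j).permMatrix K)
    (hw0 : (w0 : Matrix (Fin n) (Fin n) K) = Fin.revPerm.permMatrix K)
    {u : GLn K n} (hu : u ∈ UsMinus K n s w0) {a b : ℕ} (hb : b ≠ 0)
    (hsign : (-1 : K) ^ (a * b) = 1) {α β : Kˣ} (hβ : β ^ a = 1)
    (hx : (u : Matrix (Fin n) (Fin n) K) i j = α * β) :
    ∃ u1 ∈ Uset K n, ∃ u2 ∈ Uset K n, ∃ hA ∈ Haset K n a,
      s * u * s = u1 * s * hmatGL b i j α * hA * u2 := by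
  obtain ⟨c, rfl⟩ := (mem_UsMinus_iff hij hs hw0 u).1 hu
  rw [transvectionGL_apply_same] at hx
  subst hx
  exact ⟨_, transvectionGL_mem_Uset hij.1 _, _, transvectionGL_mem_Uset hij.1 _, _,
    hmatGL_succ_mem_Haset i j hβ hsign, conj_transvectionGL_eq hij.ne hs hb α β⟩

theorem exists_conj_eq_mul_hmatGL_pow_mul (hij : i ⋖ j)
    (hs : (s : Matrix (Fin n) (Fin n) K) = (Equiv.swap i j).permMatrix K)
    (hw0 : (w0 : Matrix (Fin n) (Fin n) K) = Fin.revPerm.permMatrix K)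
    {u : GLn K n} (hu : u ∈ UsMinus K n s w0) {ζ : Kˣ} {a b m k : ℕ}
    (hζ : orderOf ζ = a * b) (hsign : (-1 : K) ^ (a * b) = 1) (hm : m < b)
    (hx : (u : Matrix (Fin n) (Fin n) K) i j = (ζ : K) ^ (a * m + b * k)) :
    ∃ u1 ∈ Uset K n, ∃ u2 ∈ Uset K n, ∃ hA ∈ Haset K n a,
      s * u * s = u1 * s * hmatGL b i j (ζ ^ (a * m)) * hA * u2 := by
  have hβ : (ζ ^ (b * k)) ^ a = 1 := by
    rw [← pow_mul, show b * k * a = a * b * k by ring, pow_mul, ← hζ, pow_orderOf_eq_one,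
      one_pow]
  refine exists_conj_eq_mul_hmatGL_mul hij hs hw0 hu (by omega) hsign hβ ?_
  rw [hx, pow_add, Units.val_pow_eq_pow_val, Units.val_pow_eq_pow_val]

end Decomposition

section CyclicGroup

variable {G : Type*} [LeftCancelMonoid G] {ζ : G} {a b : ℕ}

theorem eq_of_pow_add_mul_eq_pow_add_mul (hcop : a.Coprime b) (hζ : orderOf ζ = a * b)
    {m m' k k' : ℕ} (hm : m < b) (hm' : m' < b)
    (h : ζ ^ (a * m + b * k) = ζ ^ (a * m' + b * k')) : m = m' := by
  rw [pow_eq_pow_iff_modEq, hζ] at h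
  have h' : a * m ≡ a * m' [MOD b] := by
    simpa only [Nat.ModEq, Nat.add_mul_mod_self_left] using h.of_mul_left a
  exact (Nat.ModEq.cancel_left_of_coprime hcop.symm h').eq_of_lt_of_lt hm hm'

theorem eq_of_pow_add_mul_eq_pow_add_mul' (hcop : a.Coprime b) (hζ : orderOf ζ = a * b)
    {m m' k k' : ℕ} (hk : k < a) (hk' : k' < a)
    (h : ζ ^ (a * m + b * k) = ζ ^ (a * m' + b * k')) : k = k' := by
  rw [add_comm (a * m), add_comm (a * m')] at h
  exact eq_of_pow_add_mul_eq_pow_add_mul hcop.symm (by rw [hζ, mul_comm]) hk hk' h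

theorem exists_pow_add_mul_eq [Finite G] (hcop : a.Coprime b) (hζ : orderOf ζ = a * b)
    (hcard : Nat.card G = a * b) (x : G) : ∃ m < b, ∃ k < a, ζ ^ (a * m + b * k) = x := by
  let f : Fin b × Fin a → G := fun p => ζ ^ (a * p.1 + b * p.2)
  have hf : f.Injective := fun p q hpq =>
    Prod.ext (Fin.ext (eq_of_pow_add_mul_eq_pow_add_mul hcop hζ p.1.2 q.1.2 hpq))
      (Fin.ext (eq_of_pow_add_mul_eq_pow_add_mul' hcop hζ p.2.2 q.2.2 hpq))
  obtain ⟨⟨m, k⟩, hmk⟩ := (hf.bijective_of_nat_card_le (by simp [hcard, mul_comm])).2 x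
  exact ⟨m, m.2, k, k.2, hmk⟩

end CyclicGroup

section FieldExponents

variable {K : Type} [Field K] {ζ : Kˣ} {a b : ℕ}

theorem exists_eq_pow_add_mul_of_ne_zero [Finite K] (hcop : a.Coprime b)
    (hζ : orderOf ζ = a * b) (hcard : Nat.card Kˣ = a * b) {x : K} (hx : x ≠ 0) :
    ∃ m < b, ∃ k < a, x = (ζ : K) ^ (a * m + b * k) := by
  obtain ⟨m, hm, k, hk, h⟩ := exists_pow_add_mul_eq hcop hζ hcard (Units.mk0 x hx)
  exact ⟨m, hm, k, hk, by rw [← Units.val_pow_eq_pow_val, h, Units.val_mk0]⟩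

theorem ncard_setOf_pow_mul_eq (hcop : a.Coprime b) (hζ : orderOf ζ = a * b) {m : K → ℕ}
    (hm : ∀ x ≠ 0, m x < b ∧ ∃ k < a, x = (ζ : K) ^ (a * m x + b * k)) {m₀ : ℕ}
    (hm₀ : m₀ < b) :
    {x : K | x ≠ 0 ∧ ζ ^ (a * m x) = ζ ^ (a * m₀)}.ncard = a := by
  have hset : {x : K | x ≠ 0 ∧ ζ ^ (a * m x) = ζ ^ (a * m₀)} =
      (fun k : ℕ => ((ζ ^ (a * m₀ + b * k) : Kˣ) : K)) '' Set.Iio a := by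
    ext x
    constructor
    · rintro ⟨hx, hxm⟩
      obtain ⟨-, k, hk, hxk⟩ := hm x hx
      refine ⟨k, hk, ?_⟩
      rw [hxk, ← Units.val_pow_eq_pow_val, pow_add, hxm, ← pow_add]
    · rintro ⟨k, hk, rfl⟩
      refine ⟨Units.ne_zero _, ?_⟩
      obtain ⟨hmx, k', -, hx⟩ := hm _ (Units.ne_zero _)
      rw [← Units.val_pow_eq_pow_val, Units.val_inj] at hx
      rw [eq_of_pow_add_mul_eq_pow_add_mul hcop hζ hmx hm₀ hx.symm]
  rw [hset, Set.InjOn.ncard_image, Set.ncard_Iio_nat]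
  intro k hk k' hk' h
  exact eq_of_pow_add_mul_eq_pow_add_mul' hcop hζ hk hk' (Units.ext h)

end FieldExponents

theorem sl2_decomposition
    (F : Type) [Field F] [Fintype F] (n a b : ℕ)
    (hab : a * b = Fintype.card F - 1) (hcop : Nat.Coprime a b)
    (ζ : Fˣ) (hζ : ∀ x : Fˣ, x ∈ Subgroup.zpowers ζ)
    (i j : Fin n) (hij : (i : ℕ) + 1 = (j : ℕ))
    (s : GLn F n)
    (hs : ∀ k l : Fin n,
      (s : Matrix (Fin n) (Fin n) F) k l = if Equiv.swap i j l = k then 1 else 0)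
    (w0 : GLn F n)
    (hw0 : ∀ k l : Fin n,
      (w0 : Matrix (Fin n) (Fin n) F) k l = if (k : ℕ) + (l : ℕ) + 1 = n then 1 else 0) :
    (∀ u : GLn F n, u ∈ Uset F n → (∃ v ∈ Uset F n, s * u * s = w0 * v * w0) →
      ∀ c m nn : ℕ, (u : Matrix (Fin n) (Fin n) F) i j = (ζ : F) ^ c →
        c = a * m + b * nn → m < b → nn < a →
        ∃ u1 ∈ Uset F n, ∃ u2 ∈ Uset F n, ∃ hA ∈ Haset F n a, ∃ hB : GLn F n,
          (hB : Matrix (Fin n) (Fin n) F) = hmat F b i j ((ζ : F) ^ (a * m)) ∧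
          s * u * s = u1 * s * hB * hA * u2) ∧
    (∃ hbOf : GLn F n → GLn F n,
      (∀ u : GLn F n, u ∈ Uset F n → (∃ v ∈ Uset F n, s * u * s = w0 * v * w0) → u ≠ 1 →
        (∃ m nn : ℕ, m < b ∧ nn < a ∧
          (u : Matrix (Fin n) (Fin n) F) i j = (ζ : F) ^ (a * m + b * nn) ∧
          (hbOf u : Matrix (Fin n) (Fin n) F) = hmat F b i j ((ζ : F) ^ (a * m))) ∧
        (∃ u1 ∈ Uset F n, ∃ u2 ∈ Uset F n, ∃ hA ∈ Haset F n a,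
          s * u * s = u1 * s * hbOf u * hA * u2)) ∧
      Equivalence (fun u u' :
          {u : GLn F n // (u ∈ Uset F n ∧ ∃ v ∈ Uset F n, s * u * s = w0 * v * w0) ∧ u ≠ 1} =>
          hbOf ↑u = hbOf ↑u') ∧
      (∀ u : GLn F n, (u ∈ Uset F n ∧ ∃ v ∈ Uset F n, s * u * s = w0 * v * w0) → u ≠ 1 →
        Set.ncard {u' : GLn F n |
          (u' ∈ Uset F n ∧ ∃ v ∈ Uset F n, s * u' * s = w0 * v * w0) ∧ u' ≠ 1 ∧
          hbOf u' = hbOf u} = a)) := by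
  have hcov : i ⋖ j := Fin.covBy_iff.2 (Nat.covBy_iff_add_one_eq.2 hij)
  have hs' := eq_permMatrix_of_apply_eq_ite (Equiv.swap_apply_self i j) hs
  have hw0' := eq_revPerm_permMatrix_of_apply hw0
  have hcard : Nat.card Fˣ = a * b := by rw [Nat.card_units, Nat.card_eq_fintype_card, hab]
  have hord : orderOf ζ = a * b := by rw [orderOf_eq_card_of_forall_mem_zpowers hζ, hcard]
  have hsign : (-1 : F) ^ (a * b) = 1 := by
    rw [← hcard, ← Units.val_one, ← Units.val_neg, ← Units.val_pow_eq_pow_val, pow_card_eq_one']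
  choose! m hm using fun (x : F) (hx : x ≠ 0) =>
    exists_eq_pow_add_mul_of_ne_zero hcop hord hcard hx
  refine ⟨fun u hu hv c m' k' hx hc hm' _ => ?_, fun u => hmatGL b i j (ζ ^ (a * m (u i j))),
    fun u hu hv hu1 => ?_, ⟨fun _ => rfl, Eq.symm, Eq.trans⟩, fun u hu hu1 => ?_⟩
  · obtain ⟨u1, hu1, u2, hu2, hA, hA', h⟩ :=
      exists_conj_eq_mul_hmatGL_pow_mul hcov hs' hw0' ⟨hu, hv⟩ hord hsign hm' (hc ▸ hx)
    exact ⟨u1, hu1, u2, hu2, hA, hA', _, by simp, h⟩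
  · obtain ⟨hmx, k, hk, hxk⟩ := hm _ (apply_ne_zero_of_mem_UsMinus hcov hs' hw0' ⟨hu, hv⟩ hu1)
    exact ⟨⟨m _, k, hmx, hk, hxk, by simp⟩,
      exists_conj_eq_mul_hmatGL_pow_mul hcov hs' hw0' ⟨hu, hv⟩ hord hsign hmx hxk⟩
  · simp only [(hmatGL_injective b i j).eq_iff]
    exact (ncard_setOf_mem_UsMinus_ne_one hcov hs' hw0' _).trans <| ncard_setOf_pow_mul_eq hcop
      hord hm (hm _ (apply_ne_zero_of_mem_UsMinus hcov hs' hw0' hu hu1)).1
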